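/- arXiv:1302.2115 — 5 statements merged into one kernel-verified Lean document; each statement's English description precedes it below -/
import Mathlib

section
/- Let G be an abelian group such that G cannot be written as KL for any two proper subgroups K, L of G. Then G is a cyclic p-group or a quasicyclic (Prüfer) p-group for some prime p. -/
open scoped Pointwise

/-- The Prüfer `p`-group, modelled as the `p`-primary component of `ℚ/ℤ`. -/
def PruferSubgroup (p : ℕ) : AddSubgroup (AddCircle (1 : ℚ)) where
  carrier := {x | ∃ n : ℕ, (p ^ n : ℕ) • x = 0}
  zero_mem' := ⟨0, smul_zero _⟩
  add_mem' := by
    rintro a b ⟨m, hm⟩ ⟨k, hk⟩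
    refine ⟨m + k, ?_⟩
    have ha : (p ^ (m + k) : ℕ) • a = 0 := by rw [add_comm, pow_add, mul_smul, hm, smul_zero]
    have hb : (p ^ (m + k) : ℕ) • b = 0 := by rw [pow_add, mul_smul, hk, smul_zero]
    rw [smul_add, ha, hb, add_zero]
  neg_mem' := by
    rintro a ⟨m, hm⟩
    exact ⟨m, by rw [smul_neg, hm, neg_zero]⟩

abbrev PruferGroup (p : ℕ) : Type := ↥(PruferSubgroup p)

/-- A group is quasicyclic of type `p` if it is isomorphic to the Prüfer `p`-group. -/
def IsQuasicyclic (p : ℕ) (G : Type*) [Group G] : Prop :=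
  Nonempty (G ≃* Multiplicative (PruferGroup p))

/-!
Since `G` is abelian, `KL = K ⊔ L`, so the hypothesis says that `⊤` is sup-irreducible in the
lattice of subgroups. The tool throughout is a subgroup `M` maximal among those avoiding a given
element `c`: every subgroup strictly above `M` contains `c`. If moreover `c ^ p ∈ M` for a prime
`p`, then `G ⧸ M` is a `p`-group, and two such subgroups for distinct primes have join `⊤`.
Applied to an element of infinite order, or to two elements whose orders have distinct prime
factors, this shows that `G` is a `p`-group. If `G` is not cyclic, a subgroup maximal among those
containing all `p`-th powers and avoiding a non-`p`-th power `c` would have join `⊤` with `⟨c⟩`,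
so `G` is `p`-divisible. Then successive `p`-th roots `a₀, a₁, …` of an element of order `p` generate a
Prüfer subgroup `D`. For `M` maximal avoiding `a₀`, the subgroup `M ⊔ D` is closed under taking
`p`-th roots, hence equal to the `p`-group `G`, and sup-irreducibility gives `D = G`.
-/

open Subgroup

section Group

variable {G : Type*} [Group G]

theorem Subgroup.mem_of_zpow_mem_of_isCoprime {H : Subgroup G} {g : G} {m n : ℤ}
    (hmn : IsCoprime m n) (hm : g ^ m ∈ H) (hn : g ^ n ∈ H) : g ∈ H := by
  obtain ⟨u, v, huv⟩ := hmn
  have hg : g = (g ^ m) ^ u * (g ^ n) ^ v := by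
    rw [← zpow_mul, ← zpow_mul, ← zpow_add, mul_comm m, mul_comm n, huv, zpow_one]
  exact hg ▸ mul_mem (zpow_mem hm u) (zpow_mem hn v)

theorem Subgroup.mem_of_pow_mem_of_coprime {H : Subgroup G} {g : G} {m n : ℕ}
    (hmn : m.Coprime n) (hm : g ^ m ∈ H) (hn : g ^ n ∈ H) : g ∈ H :=
  mem_of_zpow_mem_of_isCoprime (Nat.isCoprime_iff_coprime.2 hmn) (by simpa) (by simpa)

-- For `c` of infinite order, `orderOf c = 0` and the divisibility hypothesis holds for every `p`.
theorem notMem_zpowers_pow_of_dvd_orderOf {c : G} {p : ℕ} (hp : p ≠ 1) (hpc : p ∣ orderOf c) :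
    c ∉ zpowers (c ^ p) := by
  rintro ⟨k, hk : (c ^ p) ^ k = c⟩
  have hc : c ^ ((p : ℤ) * k - 1) = 1 := by
    rw [zpow_sub_one, zpow_mul, zpow_natCast, hk, mul_inv_cancel]
  have hpk : (p : ℤ) ∣ p * k - 1 :=
    (Int.natCast_dvd_natCast.2 hpc).trans (orderOf_dvd_iff_zpow_eq_one.2 hc)
  have hp1 : (p : ℤ) ∣ 1 := (dvd_sub_right (dvd_mul_right _ _)).1 hpk
  exact hp (Nat.dvd_one.1 (by exact_mod_cast hp1))

theorem Subgroup.exists_le_maximal_notMem {W : Subgroup G} {c : G} (hc : c ∉ W) :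
    ∃ M : Subgroup G, W ≤ M ∧ Maximal (c ∉ ·) M := by
  refine zorn_le_nonempty₀ {H | c ∉ H}
    (fun S hS hchain H hH => ⟨sSup S, ?_, fun K => le_sSup⟩) W hc
  show c ∉ sSup S
  rw [mem_sSup_of_directedOn ⟨H, hH⟩ hchain.directedOn]
  rintro ⟨K, hK, hcK⟩
  exact hS hK hcK

theorem mem_sup_zpowers_of_maximal_notMem {M : Subgroup G} {c z : G} (hM : Maximal (c ∉ ·) M)
    (hz : z ∉ M) : c ∈ M ⊔ zpowers z := by
  by_contra hc
  exact hz (hM.2 hc le_sup_left (mem_sup_right (mem_zpowers z)))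

theorem IsPGroup.eq_top_of_pow_mem_imp_mem {p : ℕ} (hpG : IsPGroup p G) {H : Subgroup G}
    (hH : ∀ y, y ^ p ∈ H → y ∈ H) : H = ⊤ := by
  have key : ∀ (k : ℕ) (x : G), x ^ p ^ k ∈ H → x ∈ H := by
    intro k
    induction k with
    | zero => simp
    | succ k ih => exact fun x hx => ih x (hH _ (by rwa [← pow_mul, ← pow_succ]))
  exact eq_top_iff.2 fun x _ => let ⟨k, hk⟩ := hpG x; key k x (hk ▸ one_mem H)

end Group

section CommGroup

variable {G : Type*} [CommGroup G] {M : Subgroup G} {c : G}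

theorem mem_of_pow_mem_of_maximal_notMem (hM : Maximal (c ∉ ·) M) {m n : ℕ} (hmn : m.Coprime n)
    (hcn : c ^ n ∈ M) {g : G} (hg : g ^ m ∈ M) : g ∈ M := by
  by_contra hgM
  have hle : M ⊔ zpowers g ≤ M.comap (powMonoidHom m) :=
    sup_le (fun x hx => pow_mem hx m) (zpowers_le.2 hg)
  exact hM.1 (mem_of_pow_mem_of_coprime hmn (hle (mem_sup_zpowers_of_maximal_notMem hM hgM)) hcn)

theorem exists_pow_prime_pow_mem_of_maximal_notMem {p : ℕ} (hp : p.Prime)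
    (hM : Maximal (c ∉ ·) M) (hcp : c ^ p ∈ M) (g : G) : ∃ e : ℕ, g ^ p ^ e ∈ M := by
  by_cases hgM : g ∈ M
  · exact ⟨0, by simpa⟩
  obtain ⟨m, hm, _, hgk, hmk⟩ := mem_sup.1 (mem_sup_zpowers_of_maximal_notMem hM hgM)
  obtain ⟨k, rfl⟩ := mem_zpowers_iff.1 hgk
  have hk : k ≠ 0 := by rintro rfl; exact hM.1 (by simpa [← hmk] using hm)
  have hgkp : g ^ (k * p) ∈ M := by
    rw [zpow_mul, eq_inv_mul_of_mul_eq hmk, zpow_natCast, mul_pow, inv_pow]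
    exact mul_mem (inv_mem (pow_mem hm p)) hcp
  have hgN : g ^ (k * p).natAbs ∈ M := by
    rcases Int.natAbs_eq (k * p) with h | h <;> rw [h] at hgkp
    · rwa [zpow_natCast] at hgkp
    · rwa [zpow_neg, inv_mem_iff, zpow_natCast] at hgkp
  obtain ⟨e, r, hpr, hkp⟩ := Nat.exists_eq_pow_mul_and_not_dvd
    (Int.natAbs_ne_zero.2 (mul_ne_zero hk (Int.natCast_ne_zero.2 hp.ne_zero))) p hp.ne_one
  refine ⟨e, mem_of_pow_mem_of_maximal_notMem hM ((hp.coprime_iff_not_dvd.2 hpr).symm) hcp ?_⟩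
  rwa [← pow_mul, ← hkp]

theorem mem_sup_zpowers_of_pow_prime_mem {p : ℕ} (hp : p.Prime) (hM : Maximal (c ∉ ·) M)
    {z : G} (hz : z ^ p ∈ M) : z ∈ M ⊔ zpowers c := by
  by_cases hzM : z ∈ M
  · exact mem_sup_left hzM
  obtain ⟨m, hm, _, hj, hmj⟩ := mem_sup.1 (mem_sup_zpowers_of_maximal_notMem hM hzM)
  obtain ⟨j, rfl⟩ := mem_zpowers_iff.1 hj
  have hpj : ¬(p : ℤ) ∣ j := by
    rintro ⟨i, rfl⟩
    rw [zpow_mul, zpow_natCast] at hmj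
    exact hM.1 (hmj ▸ mul_mem hm (zpow_mem hz i))
  have hpj : IsCoprime (p : ℤ) j := (Nat.prime_iff_prime_int.1 hp).coprime_iff_not_dvd.2 hpj
  refine mem_of_zpow_mem_of_isCoprime hpj (mem_sup_left (by simpa)) ?_
  rw [eq_inv_mul_of_mul_eq hmj]
  exact mul_mem (mem_sup_left (inv_mem hm)) (mem_sup_right (mem_zpowers c))

end CommGroup

namespace SupIrred

variable {G : Type*} [CommGroup G]

theorem eq_of_prime_dvd_orderOf (hG : SupIrred (⊤ : Subgroup G)) {p q : ℕ} (hp : p.Prime)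
    (hq : q.Prime) {c d : G} (hc : p ∣ orderOf c) (hd : q ∣ orderOf d) : p = q := by
  by_contra hpq
  obtain ⟨M, hcM, hM⟩ :=
    exists_le_maximal_notMem (notMem_zpowers_pow_of_dvd_orderOf hp.ne_one hc)
  obtain ⟨N, hdN, hN⟩ :=
    exists_le_maximal_notMem (notMem_zpowers_pow_of_dvd_orderOf hq.ne_one hd)
  have hMN : M ⊔ N = ⊤ := eq_top_iff.2 fun g _ => by
    obtain ⟨m, hm⟩ := exists_pow_prime_pow_mem_of_maximal_notMem hp hM (zpowers_le.1 hcM) g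
    obtain ⟨n, hn⟩ := exists_pow_prime_pow_mem_of_maximal_notMem hq hN (zpowers_le.1 hdN) g
    exact mem_of_pow_mem_of_coprime (((Nat.coprime_primes hp hq).2 hpq).pow m n)
      (mem_sup_left hm) (mem_sup_right hn)
  rcases hG.2 hMN with h | h
  · exact hM.1 (h ▸ mem_top c)
  · exact hN.1 (h ▸ mem_top d)

theorem orderOf_ne_zero (hG : SupIrred (⊤ : Subgroup G)) (g : G) : orderOf g ≠ 0 := fun h =>
  absurd (hG.eq_of_prime_dvd_orderOf Nat.prime_two Nat.prime_three (h ▸ dvd_zero 2)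
    (h ▸ dvd_zero 3)) (by norm_num)

theorem isPGroup_of_prime_dvd_orderOf (hG : SupIrred (⊤ : Subgroup G)) {p : ℕ} (hp : p.Prime)
    {c : G} (hc : p ∣ orderOf c) : IsPGroup p G := by
  have := Fact.mk hp
  exact IsPGroup.iff_orderOf.2 fun g => ⟨_, Nat.eq_prime_pow_of_unique_prime_dvd
    (hG.orderOf_ne_zero g) fun hq hqg => hG.eq_of_prime_dvd_orderOf hq hp hqg hc⟩

theorem exists_pow_eq_of_not_isCyclic (hG : SupIrred (⊤ : Subgroup G)) (hcyc : ¬IsCyclic G)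
    {p : ℕ} (hp : p.Prime) (g : G) : ∃ y, y ^ p = g := by
  by_contra! hg
  obtain ⟨M, hpowM, hM⟩ := exists_le_maximal_notMem (W := (powMonoidHom p).range) (c := g)
    fun ⟨y, hy⟩ => hg y hy
  have hMg : M ⊔ zpowers g = ⊤ :=
    eq_top_iff.2 fun x _ => mem_sup_zpowers_of_pow_prime_mem hp hM (hpowM ⟨x, rfl⟩)
  rcases hG.2 hMg with h | h
  · exact hM.1 (h ▸ mem_top g)
  · exact hcyc (isCyclic_iff_exists_zpowers_eq_top.2 ⟨g, h⟩)

end SupIrred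

def IsRootChain {M : Type*} [Monoid M] (p : ℕ) (a : ℕ → M) : Prop :=
  ∀ n, a (n + 1) ^ p = a n

namespace IsRootChain

section Monoid

variable {M : Type*} [Monoid M] {p : ℕ} {a : ℕ → M}

theorem exists_of_forall_exists_pow_eq (hdiv : ∀ g : M, ∃ y, y ^ p = g) (a₀ : M) :
    ∃ a, IsRootChain p a ∧ a 0 = a₀ := by
  choose r hr using hdiv
  exact ⟨fun n => r^[n] a₀, fun n => by simp only [Function.iterate_succ_apply', hr], rfl⟩

theorem pow_pow_eq (ha : IsRootChain p a) (n d : ℕ) : a (n + d) ^ p ^ d = a n := by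
  induction d with
  | zero => simp
  | succ d ih => rw [pow_succ', pow_mul, ← add_assoc, ha, ih]

theorem orderOf_eq [Fact p.Prime] (ha : IsRootChain p a) (ha₀ : orderOf (a 0) = p) (n : ℕ) :
    orderOf (a n) = p ^ (n + 1) := by
  induction n with
  | zero => simpa using ha₀
  | succ n ih =>
    have hp := (Fact.out : p.Prime)
    apply orderOf_eq_prime_pow
    · rw [pow_succ', pow_mul, ha]
      exact pow_ne_one_of_lt_orderOf (pow_ne_zero n hp.ne_zero)
        (ih ▸ Nat.pow_lt_pow_right hp.one_lt n.lt_succ_self)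
    · rw [pow_succ', pow_mul, ha, ← ih, pow_orderOf_eq_one]

end Monoid

section Group

variable {G H : Type*} [Group G] [Group H] {p : ℕ} {a : ℕ → G} {b : ℕ → H}

theorem monotone_zpowers (ha : IsRootChain p a) : Monotone fun n => zpowers (a n) :=
  monotone_nat_of_le_succ fun n => by
    rw [zpowers_le, ← ha n]
    exact pow_mem (mem_zpowers _) p

theorem zpow_mul_zpow (ha : IsRootChain p a) (n m : ℕ) (k l : ℤ) :
    a n ^ k * a m ^ l = a (n + m) ^ (k * p ^ m + l * p ^ n) := by
  conv_lhs => rw [← ha.pow_pow_eq n m, ← ha.pow_pow_eq m n, add_comm m n]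
  rw [zpow_add, mul_comm k, mul_comm l, zpow_mul, zpow_mul]
  norm_cast

theorem zpow_eq_zpow_iff (ha : IsRootChain p a) (n m : ℕ) (k l : ℤ) :
    a n ^ k = a m ^ l ↔ k * p ^ m ≡ l * p ^ n [ZMOD orderOf (a (n + m))] := by
  rw [← ha.pow_pow_eq n m, ← ha.pow_pow_eq m n, add_comm m n, ← zpow_natCast,
    ← zpow_natCast, ← zpow_mul, ← zpow_mul, zpow_eq_zpow_iff_modEq]
  push_cast
  rw [mul_comm k, mul_comm l]

theorem nonempty_mulEquiv (ha : IsRootChain p a) (hb : IsRootChain p b)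
    (hord : ∀ n, orderOf (a n) = orderOf (b n)) (hGa : ∀ x, ∃ n, x ∈ zpowers (a n))
    (hHb : ∀ y, ∃ n, y ∈ zpowers (b n)) : Nonempty (G ≃* H) := by
  have hab : ∀ n m (k l : ℤ), a n ^ k = a m ^ l ↔ b n ^ k = b m ^ l := fun n m k l => by
    rw [ha.zpow_eq_zpow_iff, hb.zpow_eq_zpow_iff, hord]
  choose n k hk using fun x => (hGa x).imp fun _ => mem_zpowers_iff.1
  have hf : ∀ x m (l : ℤ), a m ^ l = x → b (n x) ^ k x = b m ^ l := fun x m l h =>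
    (hab (n x) m (k x) l).1 ((hk x).trans h.symm)
  let f : G →* H := MonoidHom.mk' (fun x => b (n x) ^ k x) fun x y => by
    rw [hb.zpow_mul_zpow]
    exact hf _ _ _ (by rw [← ha.zpow_mul_zpow, hk, hk])
  refine ⟨MulEquiv.ofBijective f ⟨fun x y hxy => ?_, fun y => ?_⟩⟩
  · rw [← hk x, ← hk y]
    exact (hab _ _ _ _).2 hxy
  · obtain ⟨m, l, rfl⟩ := (hHb y).imp fun _ => mem_zpowers_iff.1
    exact ⟨a m ^ l, hf _ m l rfl⟩

end Group

theorem forall_mem_zpowers {G : Type*} [CommGroup G] (hG : SupIrred (⊤ : Subgroup G)) {p : ℕ}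
    (hp : p.Prime) (hpG : IsPGroup p G) {a : ℕ → G} (ha : IsRootChain p a) (ha₀ : a 0 ≠ 1) :
    ∀ x, ∃ n, x ∈ zpowers (a n) := by
  set D := ⨆ n, zpowers (a n)
  have hDp : D ≤ D.map (powMonoidHom p) := iSup_le fun n => by
    rw [zpowers_le, ← ha n]
    exact mem_map_of_mem _ (mem_iSup_of_mem (n + 1) (mem_zpowers _))
  obtain ⟨M, -, hM⟩ := exists_le_maximal_notMem (W := ⊥) (c := a 0) (by simpa using ha₀)
  have hMD : M ⊔ D = ⊤ := hpG.eq_top_of_pow_mem_imp_mem fun y hy => by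
    obtain ⟨m, hm, d, hd, hmd⟩ := mem_sup.1 hy
    obtain ⟨e, he, rfl⟩ := hDp hd
    have hye : (y * e⁻¹) ^ p ∈ M := by
      rwa [mul_pow, inv_pow, ← hmd, powMonoidHom_apply, mul_inv_cancel_right]
    have hle : M ⊔ zpowers (a 0) ≤ M ⊔ D :=
      sup_le_sup_left (le_iSup (fun n => zpowers (a n)) 0) M
    simpa using mul_mem (hle (mem_sup_zpowers_of_pow_prime_mem hp hM hye)) (mem_sup_right he)
  rcases hG.2 hMD with h | h
  · exact absurd (h ▸ mem_top (a 0)) hM.1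
  · exact fun x =>
      (mem_iSup_of_directed ha.monotone_zpowers.directed_le).1 (eq_top_iff.1 h (mem_top x))

end IsRootChain

namespace PruferGroup

def gen (p n : ℕ) : PruferGroup p :=
  ⟨(((p : ℚ) ^ (n + 1))⁻¹ : ℚ), n + 1, by
    rcases eq_or_ne p 0 with rfl | hp
    · simp
    · rw [← AddCircle.coe_nsmul, nsmul_eq_mul, Nat.cast_pow, mul_inv_cancel₀ (by positivity),
        AddCircle.coe_period]⟩

theorem coe_gen (p n : ℕ) :
    (gen p n : AddCircle (1 : ℚ)) = (((p : ℚ) ^ (n + 1))⁻¹ : ℚ) :=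
  rfl

theorem isRootChain_ofAdd_gen (p : ℕ) :
    IsRootChain p fun n => Multiplicative.ofAdd (gen p n) := fun n => by
  dsimp only
  rw [← ofAdd_nsmul, EmbeddingLike.apply_eq_iff_eq, ← Subtype.coe_inj, AddSubgroup.coe_nsmul,
    coe_gen, coe_gen, ← AddCircle.coe_nsmul, nsmul_eq_mul]
  congr 1
  rcases eq_or_ne (p : ℚ) 0 with hp | hp
  · simp [hp]
  · field_simp
    ring

theorem orderOf_ofAdd_gen {p : ℕ} (hp : p ≠ 0) (n : ℕ) :
    orderOf (Multiplicative.ofAdd (gen p n)) = p ^ (n + 1) := by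
  rw [orderOf_ofAdd_eq_addOrderOf, ← AddSubgroup.addOrderOf_coe, coe_gen, inv_eq_one_div,
    ← Nat.cast_pow, AddCircle.addOrderOf_period_div (by positivity)]

theorem exists_mem_zpowers_ofAdd_gen {p : ℕ} (hp : p ≠ 0) (y : Multiplicative (PruferGroup p)) :
    ∃ n, y ∈ zpowers (Multiplicative.ofAdd (gen p n)) := by
  obtain ⟨⟨u, e, he⟩, rfl⟩ := Multiplicative.ofAdd.surjective y
  obtain ⟨q, rfl⟩ := QuotientAddGroup.mk_surjective u
  rw [← AddCircle.coe_nsmul, AddCircle.coe_eq_zero_iff] at he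
  obtain ⟨z, hz⟩ := he
  rw [zsmul_one, nsmul_eq_mul] at hz
  refine ⟨e, mem_zpowers_iff.2 ⟨z * p, ?_⟩⟩
  rw [← ofAdd_zsmul, EmbeddingLike.apply_eq_iff_eq, ← Subtype.coe_inj, AddSubgroup.coe_zsmul,
    coe_gen, ← AddCircle.coe_zsmul, zsmul_eq_mul, Int.cast_mul, hz]
  congr 1
  push_cast
  field_simp
  ring

end PruferGroup

/-- Let `G` be an abelian group such that `G ≠ K * L` for any two proper subgroups
`K, L`. Then `G` is a cyclic `p`-group or a quasicyclic `p`-group for some prime `p`. -/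
theorem abelian_not_product_of_proper_subgroups {G : Type*} [CommGroup G]
    (h : ∀ K L : Subgroup G, K ≠ ⊤ → L ≠ ⊤ → (K : Set G) * (L : Set G) ≠ Set.univ) :
    ∃ p : ℕ, p.Prime ∧ ((IsCyclic G ∧ IsPGroup p G) ∨ IsQuasicyclic p G) := by
  rcases subsingleton_or_nontrivial G with _ | _
  · exact ⟨2, Nat.prime_two, .inl ⟨inferInstance, fun g => ⟨0, Subsingleton.elim _ _⟩⟩⟩
  have hG : SupIrred (⊤ : Subgroup G) := ⟨not_isMin_top, fun K L hKL => by
    by_contra! hne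
    exact h K L hne.1 hne.2 (by rw [← mul_normal, hKL, coe_top])⟩
  obtain ⟨g, hg⟩ := exists_ne (1 : G)
  obtain ⟨p, hp, hpg⟩ := Nat.exists_prime_and_dvd (orderOf_eq_one_iff.not.2 hg)
  have hpG := hG.isPGroup_of_prime_dvd_orderOf hp hpg
  refine ⟨p, hp, (em (IsCyclic G)).imp (⟨·, hpG⟩) fun hcyc => ?_⟩
  have := Fact.mk hp
  obtain ⟨a, ha, ha₀⟩ := IsRootChain.exists_of_forall_exists_pow_eq
    (hG.exists_pow_eq_of_not_isCyclic hcyc hp) (g ^ (orderOf g / p))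
  have hg₀ : orderOf (a 0) = p := ha₀ ▸ orderOf_pow_orderOf_div (hG.orderOf_ne_zero g) hpg
  have hgen := ha.forall_mem_zpowers hG hp hpG fun h₁ =>
    hp.ne_one (by rw [← hg₀, h₁, orderOf_one])
  exact ha.nonempty_mulEquiv (PruferGroup.isRootChain_ofAdd_gen p)
    (fun n => (ha.orderOf_eq hg₀ n).trans (PruferGroup.orderOf_ofAdd_gen hp.ne_zero n).symm) hgen
    (PruferGroup.exists_mem_zpowers_ofAdd_gen hp.ne_zero)
end

section
/- Let G be a soluble group which is not finitely generated and such that G ≠ ⟨K, L⟩ for any proper subgroups K, L of G. Then the abelianization G/[G,G] is a quasicyclic p-group for some prime p. -/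
open Function

/-- Unlike `SupIrred ⊤`, this allows `⊤ = ⊥`. -/
def TopSupIrred (α : Type*) [Lattice α] [OrderTop α] : Prop :=
  ∀ a b : α, a ⊔ b = ⊤ → a = ⊤ ∨ b = ⊤

theorem OrderIso.topSupIrred {α β : Type*} [Lattice α] [OrderTop α] [Lattice β] [OrderTop β]
    (e : α ≃o β) (h : TopSupIrred α) : TopSupIrred β := by
  intro a b hab
  have : e.symm a ⊔ e.symm b = ⊤ := by rw [← map_sup, hab, map_top]
  exact (h _ _ this).imp (fun ha => by simpa using congr(e $ha)) fun hb => by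
    simpa using congr(e $hb)

section Surjective

variable {G H : Type*} [Group G] [Group H] {f : G →* H}

@[to_additive]
theorem Subgroup.topSupIrred_of_surjective (h : TopSupIrred (Subgroup G)) (hf : Surjective f) :
    TopSupIrred (Subgroup H) := by
  intro K L hKL
  have hsup : K.comap f ⊔ L.comap f = ⊤ := by
    rw [← sup_eq_left.mpr ((ker_le_comap f K).trans le_sup_left), ← comap_map_eq, map_sup,
      map_comap_eq_self_of_surjective hf, map_comap_eq_self_of_surjective hf, hKL, comap_top]
  exact (h _ _ hsup).imp (fun hK => comap_injective hf (hK.trans (comap_top f).symm))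
    fun hL => comap_injective hf (hL.trans (comap_top f).symm)

theorem TopSupIrred.isCyclic_of_surjective (h : TopSupIrred (Subgroup G)) (hf : Surjective f)
    (hker : f.ker ≠ ⊤) [IsCyclic H] : IsCyclic G := by
  obtain ⟨y, hy⟩ := isCyclic_iff_exists_zpowers_eq_top.mp ‹IsCyclic H›
  obtain ⟨g, rfl⟩ := hf y
  have hsup : Subgroup.zpowers g ⊔ f.ker = ⊤ := by
    rw [← Subgroup.comap_map_eq, MonoidHom.map_zpowers, hy, Subgroup.comap_top]
  exact isCyclic_iff_exists_zpowers_eq_top.mpr ⟨g, (h _ _ hsup).resolve_right hker⟩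

end Surjective

section ZMod

variable {G : Type*} [AddGroup G] {n : ℕ} {g : G}

def ZMod.addHomOfAddOrderOf (hg : addOrderOf g = n) : ZMod n →+ G :=
  ZMod.lift n ⟨zmultiplesHom G g, by simp [← hg, addOrderOf_nsmul_eq_zero]⟩

variable (hg : addOrderOf g = n)

theorem ZMod.addHomOfAddOrderOf_intCast (k : ℤ) : addHomOfAddOrderOf hg k = k • g := by
  simp [addHomOfAddOrderOf]

theorem ZMod.addHomOfAddOrderOf_injective : Injective (addHomOfAddOrderOf hg) :=
  (ZMod.lift_injective n).mpr fun m hm => by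
    rw [ZMod.intCast_zmod_eq_zero_iff_dvd, ← hg]
    exact addOrderOf_dvd_iff_zsmul_eq_zero.mpr hm

end ZMod

theorem AddSubgroup.exists_le_maximal_notMem {G : Type*} [AddGroup G] {H : AddSubgroup G} {x : G}
    (hx : x ∉ H) : ∃ M : AddSubgroup G, H ≤ M ∧ x ∉ M ∧ ∀ a ∉ M, x ∈ M ⊔ zmultiples a := by
  obtain ⟨M, hHM, hM⟩ := zorn_le_nonempty₀ {M : AddSubgroup G | H ≤ M ∧ x ∉ M}
    (fun c hc hchain K hK => ⟨sSup c, ⟨(hc hK).1.trans (le_sSup hK), fun hx => by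
      obtain ⟨N, hN, hxN⟩ := (mem_sSup_of_directedOn ⟨K, hK⟩ hchain.directedOn).mp hx
      exact (hc hN).2 hxN⟩, fun _ => le_sSup⟩) H ⟨le_rfl, hx⟩
  refine ⟨M, hHM, hM.prop.2, fun a ha => by_contra fun hxa => ha ?_⟩
  exact hM.le_of_ge ⟨hM.prop.1.trans le_sup_left, hxa⟩ le_sup_left
    (mem_sup_right (mem_zmultiples a))

theorem surjective_nsmul_of_surjective_prime_nsmul {M : Type*} [AddMonoid M]
    (h : ∀ p : ℕ, p.Prime → Surjective fun a : M => p • a) {n : ℕ} (hn : n ≠ 0) :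
    Surjective fun a : M => n • a := by
  induction n using Nat.recOnMul with
  | zero => exact absurd rfl hn
  | one => exact fun a => ⟨a, one_smul ℕ a⟩
  | prime p hp => exact h p hp
  | mul a b iha ihb =>
    simp only [mul_smul]
    exact (iha (left_ne_zero_of_mul hn)).comp (ihb (right_ne_zero_of_mul hn))

theorem dvd_of_zsmul_mem_zmultiples_zsmul {G : Type*} [AddGroup G] {b : G}
    (hb : ¬IsOfFinAddOrder b) {s q : ℤ} (h : s • b ∈ AddSubgroup.zmultiples (q • b)) : q ∣ s := by
  obtain ⟨c, hc⟩ := AddSubgroup.mem_zmultiples_iff.mp h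
  rw [smul_smul] at hc
  exact ⟨c, (injective_zsmul_iff_not_isOfFinAddOrder.mpr hb hc).symm.trans (mul_comm c q)⟩

namespace PruferGroup

variable {p : ℕ}

theorem exists_pow_nsmul_eq_zero (x : PruferGroup p) : ∃ n, p ^ n • x = 0 :=
  let ⟨n, hn⟩ := x.2
  ⟨n, Subtype.ext hn⟩

theorem exists_pow_nsmul_ne_zero {x : PruferGroup p} (hx : x ≠ 0) :
    ∃ n, p ^ n • x ≠ 0 ∧ p • p ^ n • x = 0 := by
  obtain ⟨N, hN⟩ := exists_pow_nsmul_eq_zero x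
  induction N with
  | zero => simp_all
  | succ N ih =>
    by_cases h : p ^ N • x = 0
    · exact ih h
    · exact ⟨N, h, by rwa [smul_smul, ← pow_succ']⟩

variable (p) in
def oneDiv : PruferGroup p :=
  ⟨((1 / p : ℚ) : AddCircle (1 : ℚ)), 1, by
    rcases eq_or_ne p 0 with rfl | hp
    · simp
    rw [pow_one, ← AddCircle.coe_nsmul, nsmul_eq_mul, mul_one_div_cancel (mod_cast hp),
      AddCircle.coe_period]⟩

theorem addOrderOf_oneDiv (hp : 0 < p) : addOrderOf (oneDiv p) = p := by
  rw [← AddSubgroup.addOrderOf_coe]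
  exact AddCircle.addOrderOf_period_div hp

theorem mem_zmultiples_oneDiv (hp : 0 < p) {y : PruferGroup p} (hy : p • y = 0) :
    y ∈ AddSubgroup.zmultiples (oneDiv p) := by
  obtain ⟨m, -, hm⟩ := (AddCircle.nsmul_eq_zero_iff hp).mp congr(Subtype.val $hy)
  refine ⟨m, Subtype.ext ?_⟩
  rw [← hm, AddCircle.natCast_div_mul_eq_nsmul]
  rfl

theorem surjective_prime_nsmul {q : ℕ} (hq : q.Prime) :
    Surjective fun x : PruferGroup p => q • x := by
  intro x
  obtain ⟨N, hN⟩ := exists_pow_nsmul_eq_zero x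
  rcases Nat.coprime_or_dvd_of_prime hq p with hqp | ⟨c, rfl⟩
  · have hcop : q.Coprime (addOrderOf x) :=
      (hqp.pow_right N).coprime_dvd_right (addOrderOf_dvd_of_nsmul_eq_zero hN)
    obtain ⟨m, hm⟩ := exists_nsmul_eq_self_of_coprime hcop
    exact ⟨m • x, (smul_comm q m x).trans hm⟩
  · obtain ⟨y, hy : (q : ℤ) • y = x⟩ :=
      DivisibleBy.surjective_smul (AddCircle (1 : ℚ)) ℤ (n := q) (mod_cast hq.ne_zero) x
    rw [natCast_zsmul] at hy
    refine ⟨⟨y, N + 1, ?_⟩, Subtype.ext hy⟩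
    rw [show (q * c) ^ (N + 1) = c * (q * c) ^ N * q by ring, mul_smul, hy, mul_smul,
      ← AddSubgroup.coe_nsmul, hN, AddSubgroup.coe_zero, smul_zero]

noncomputable instance : DivisibleBy (PruferGroup p) ℤ :=
  letI : DivisibleBy (PruferGroup p) ℕ := divisibleByOfSMulRightSurj _ _
    (surjective_nsmul_of_surjective_prime_nsmul fun _ => surjective_prime_nsmul)
  AddGroup.divisibleByIntOfDivisibleByNat _

end PruferGroup

section Abelian

variable {A : Type*} [AddCommGroup A]

theorem AddSubgroup.zmultiples_eq_top_of_forall_nsmul_ne (hA : TopSupIrred (AddSubgroup A))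
    {p : ℕ} (hp : p.Prime) {x : A} (hx : ∀ y : A, p • y ≠ x) : zmultiples x = ⊤ := by
  obtain ⟨M, hpM, hxM, hM⟩ := exists_le_maximal_notMem (H := (nsmulAddMonoidHom (α := A) p).range)
    (x := x) fun ⟨y, hy⟩ => hx y hy
  refine (hA M _ ?_).resolve_left fun h => hxM (h ▸ mem_top x)
  refine (eq_top_iff' _).mpr fun a => ?_
  by_cases haM : a ∈ M
  · exact mem_sup_left haM
  -- `x = m + k • a` with `p ∤ k`, so `a` is a combination of `p • a ∈ M` and `k • a ∈ M + ⟨x⟩`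
  obtain ⟨m, hm, _, ⟨k, rfl⟩, hmk : m + k • a = x⟩ := mem_sup.mp (hM a haM)
  have hpa (c : ℤ) : (c * p) • a ∈ M := hpM ⟨c • a, by simp [mul_smul, smul_comm c]⟩
  obtain ⟨u, v, huv⟩ : IsCoprime (p : ℤ) k := by
    refine (Nat.prime_iff_prime_int.mp hp).coprime_iff_not_dvd.mpr fun ⟨c, hc⟩ => hxM ?_
    rw [← hmk, hc, mul_comm]
    exact add_mem hm (hpa c)
  have ha : a = (u * p) • a + (v • x - v • m) := by
    rw [← hmk, smul_add, add_sub_cancel_left, smul_smul, ← add_smul, huv, one_smul]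
  rw [ha]
  exact add_mem (mem_sup_left (hpa u))
    (sub_mem (mem_sup_right (zsmul_mem (mem_zmultiples x) v)) (mem_sup_left (zsmul_mem hm v)))

theorem surjective_nsmul_of_topSupIrred (hA : TopSupIrred (AddSubgroup A)) (hc : ¬IsAddCyclic A)
    {n : ℕ} (hn : n ≠ 0) : Surjective fun a : A => n • a :=
  surjective_nsmul_of_surjective_prime_nsmul (fun _ hp x => by_contra fun hx => hc <|
    isAddCyclic_iff_exists_zmultiples_eq_top.mpr
      ⟨x, AddSubgroup.zmultiples_eq_top_of_forall_nsmul_ne hA hp fun y hy => hx ⟨y, hy⟩⟩) hn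

theorem AddSubgroup.eq_top_of_divisibleBy (hA : TopSupIrred (AddSubgroup A)) (D : AddSubgroup A)
    [DivisibleBy D ℤ] (hD : D ≠ ⊥) : D = ⊤ := by
  -- by Baer's criterion `D` is injective, so `A = D ⊕ ker r` for a retraction `r : A → D`
  obtain ⟨r, hr⟩ := (Module.Baer.of_divisible D).extension_property_addMonoidHom D.subtype
    Subtype.val_injective (AddMonoidHom.id D)
  have hr' (d : D) : r d = d := DFunLike.congr_fun hr d
  refine (hA D r.ker ?_).resolve_right fun h => hD ?_
  · refine (eq_top_iff' _).mpr fun a => ?_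
    rw [← add_sub_cancel (r a : A) a]
    exact add_mem (mem_sup_left (r a).2) (mem_sup_right (by simp [hr']))
  · refine (eq_bot_iff_forall D).mpr fun d hd => ?_
    have : d ∈ r.ker := h ▸ mem_top d
    simpa [hr' ⟨d, hd⟩] using this

theorem nonempty_addEquiv_pruferGroup_of_addOrderOf_eq_prime [DivisibleBy A ℤ]
    (hA : TopSupIrred (AddSubgroup A)) {p : ℕ} (hp : p.Prime) {u : A} (hu : addOrderOf u = p) :
    Nonempty (PruferGroup p ≃+ A) := by
  have hgen := PruferGroup.addOrderOf_oneDiv hp.pos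
  obtain ⟨φ, hφ⟩ := (Module.Baer.of_divisible A).extension_property_addMonoidHom
    (ZMod.addHomOfAddOrderOf hgen) (ZMod.addHomOfAddOrderOf_injective hgen)
    (ZMod.addHomOfAddOrderOf hu)
  have hφ' (k : ℤ) : φ (k • PruferGroup.oneDiv p) = k • u := by
    rw [← ZMod.addHomOfAddOrderOf_intCast hgen, ← AddMonoidHom.comp_apply, hφ,
      ZMod.addHomOfAddOrderOf_intCast]
  have hinj : Injective φ := by
    refine (injective_iff_map_eq_zero φ).mpr fun x hx => by_contra fun hx0 => ?_
    obtain ⟨n, hn, hpn⟩ := PruferGroup.exists_pow_nsmul_ne_zero hx0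
    obtain ⟨k, hk⟩ :=
      AddSubgroup.mem_zmultiples_iff.mp (PruferGroup.mem_zmultiples_oneDiv hp.pos hpn)
    have hku : (k : ZMod p) = 0 := by
      apply ZMod.addHomOfAddOrderOf_injective hu
      rw [ZMod.addHomOfAddOrderOf_intCast, ← hφ', hk, map_nsmul, hx, smul_zero, map_zero]
    rw [← hk, ← ZMod.addHomOfAddOrderOf_intCast hgen, hku, map_zero] at hn
    exact hn rfl
  have hsurj : φ.range = ⊤ := by
    have : DivisibleBy φ.range ℤ :=
      φ.rangeRestrict_surjective.divisibleBy _ fun x n => map_zsmul φ.rangeRestrict n x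
    refine AddSubgroup.eq_top_of_divisibleBy hA _ fun h => ?_
    have hu0 : u ≠ 0 := by
      rintro rfl
      exact hp.one_lt.ne' (hu ▸ addOrderOf_zero)
    refine hu0 (AddSubgroup.mem_bot.mp (h ▸ ⟨PruferGroup.oneDiv p, ?_⟩))
    simpa using hφ' 1
  exact ⟨AddEquiv.ofBijective φ ⟨hinj, φ.range_eq_top.mp hsurj⟩⟩

theorem isOfFinAddOrder_of_topSupIrred [DivisibleBy A ℤ] (hA : TopSupIrred (AddSubgroup A))
    (x : A) : IsOfFinAddOrder x := by
  by_contra hx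
  obtain ⟨b₂, hb₂ : (2 : ℤ) • b₂ = x⟩ := DivisibleBy.surjective_smul A ℤ two_ne_zero x
  obtain ⟨b₃, hb₃ : (3 : ℤ) • b₃ = x⟩ := DivisibleBy.surjective_smul A ℤ three_ne_zero x
  have hinf {b : A} {n : ℤ} (hb : n • b = x) : ¬IsOfFinAddOrder b := fun h => hx (hb ▸ h.zsmul)
  let : DivisibleBy A ℕ := AddGroup.divisibleByNatOfDivisibleByInt A
  let : DivisibleBy (A ⧸ AddSubgroup.zmultiples x) ℤ := AddGroup.divisibleByIntOfDivisibleByNat _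
  have hQ := AddSubgroup.topSupIrred_of_surjective hA
    (QuotientAddGroup.mk'_surjective (AddSubgroup.zmultiples x))
  have h2 : addOrderOf (b₂ : A ⧸ AddSubgroup.zmultiples x) = 2 := by
    refine addOrderOf_eq_prime ?_ fun h => ?_
    · rw [← QuotientAddGroup.mk_nsmul, ← natCast_zsmul, Nat.cast_ofNat, hb₂,
        QuotientAddGroup.eq_zero_iff]
      exact AddSubgroup.mem_zmultiples x
    · rw [QuotientAddGroup.eq_zero_iff, ← hb₂] at h
      have := dvd_of_zsmul_mem_zmultiples_zsmul (s := 1) (q := 2) (hinf hb₂) (by rwa [one_smul])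
      norm_num at this
  obtain ⟨e⟩ := nonempty_addEquiv_pruferGroup_of_addOrderOf_eq_prime hQ Nat.prime_two h2
  obtain ⟨n, hn⟩ := PruferGroup.exists_pow_nsmul_eq_zero (e.symm b₃)
  have h3 : ((2 : ℤ) ^ n) • b₃ ∈ AddSubgroup.zmultiples ((3 : ℤ) • b₃) := by
    rw [hb₃, ← QuotientAddGroup.eq_zero_iff]
    simpa [← natCast_zsmul] using congr(e $hn)
  have := Int.prime_three.dvd_of_dvd_pow (dvd_of_zsmul_mem_zmultiples_zsmul (hinf hb₃) h3)
  norm_num at this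

theorem nonempty_addEquiv_pruferGroup_of_topSupIrred (hA : TopSupIrred (AddSubgroup A))
    (hc : ¬IsAddCyclic A) : ∃ p : ℕ, p.Prime ∧ Nonempty (PruferGroup p ≃+ A) := by
  let : DivisibleBy A ℕ := divisibleByOfSMulRightSurj A ℕ (surjective_nsmul_of_topSupIrred hA hc)
  let : DivisibleBy A ℤ := AddGroup.divisibleByIntOfDivisibleByNat A
  obtain ⟨x, hx⟩ : ∃ x : A, x ≠ 0 := by
    by_contra! h
    exact hc ⟨0, fun y => by simp [h y]⟩
  have hq := Nat.minFac_prime (mt AddMonoid.addOrderOf_eq_one_iff.mp hx)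
  -- `addOrderOf_nsmul_addOrderOf_sub` is the additive form of `orderOf_pow_orderOf_div`
  exact ⟨_, hq, nonempty_addEquiv_pruferGroup_of_addOrderOf_eq_prime hA hq
    (addOrderOf_nsmul_addOrderOf_sub (isOfFinAddOrder_of_topSupIrred hA x).addOrderOf_pos.ne'
      (Nat.minFac_dvd _))⟩

end Abelian

/-- Let `G` be a soluble group which is not finitely generated and such that
`G ≠ ⟨K, L⟩` for any proper subgroups `K, L`. Then `G/[G,G]` is a quasicyclic
`p`-group for some prime `p`. -/
theorem abelianization_quasicyclic_of_not_join {G : Type*} [Group G] [Group.IsSolvable G]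
    (hfg : ¬ Group.FG G)
    (h : ∀ K L : Subgroup G, K ≠ ⊤ → L ≠ ⊤ → K ⊔ L ≠ ⊤) :
    ∃ p : ℕ, p.Prime ∧ IsQuasicyclic p (Abelianization G) := by
  have hG : TopSupIrred (Subgroup G) := fun K L hKL => by
    by_contra! hne
    exact h K L hne.1 hne.2 hKL
  have : Nontrivial G := by
    by_contra!
    exact hfg Group.fg_of_finite
  have hsurj : Surjective (Abelianization.of (G := G)) := QuotientGroup.mk_surjective
  have hker : Abelianization.of.ker ≠ (⊤ : Subgroup G) := by
    rw [Abelianization.ker_of]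
    exact (Group.IsSolvable.commutator_lt_top_of_nontrivial G).ne
  have hcyc : ¬IsAddCyclic (Additive (Abelianization G)) := by
    rw [isAddCyclic_additive_iff]
    intro
    obtain ⟨g, hg⟩ := isCyclic_iff_exists_zpowers_eq_top.mp (hG.isCyclic_of_surjective hsurj hker)
    exact hfg (Group.fg_iff.mpr ⟨{g}, by rw [← Subgroup.zpowers_eq_closure, hg],
      Set.finite_singleton g⟩)
  obtain ⟨p, hp, ⟨e⟩⟩ := nonempty_addEquiv_pruferGroup_of_topSupIrred
    (Subgroup.toAddSubgroup.topSupIrred (Subgroup.topSupIrred_of_surjective hG hsurj)) hcyc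
  exact ⟨p, hp, ⟨AddEquiv.toMultiplicativeRight e.symm⟩⟩
end

section
/- (Kaluzhnin's theorem, length n case) Let A be an abelian group with a series of subgroups 0 = A₀ ≤ A₁ ≤ … ≤ Aₙ = A, and let G act on A by automorphisms stabilizing each Aᵢ and acting trivially on each factor Aᵢ₊₁/Aᵢ. Then the image of G in Aut(A) is nilpotent of class at most n − 1. -/
/-!
Let `S k` be the group of those `g` which move every `Aᵢ₊ₖ` into `Aᵢ`, i.e. `(g - 1) Aᵢ₊ₖ ⊆ Aᵢ`.
Writing the commutator of `g` and `h` as `(gh - hg)` applied to `(hg)⁻¹ a`, and expanding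
`gh - hg = (g - 1)(h - 1) - (h - 1)(g - 1)`, shows `⁅S k, S l⁆ ≤ S (k + l)`. Since `S 1 = G`,
the lower central series satisfies `γₖ₊₁ G ≤ S (k + 1)`, and `S n` acts trivially on `A`.
-/

theorem monotone_comp_min {α : Type*} [Preorder α] {f : ℕ → α} {n : ℕ}
    (hf : ∀ i < n, f i ≤ f (i + 1)) : Monotone fun i => f (min i n) :=
  monotone_nat_of_le_succ fun i => by
    rcases lt_or_ge i n with hi | hi
    · simpa [Nat.min_eq_left hi.le, Nat.min_eq_left hi] using hf i hi
    · simp [Nat.min_eq_right hi, Nat.min_eq_right (hi.trans i.le_succ)]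

section SeriesStabilizer

open scoped commutatorElement

variable {G A : Type*} [Group G] [AddCommGroup A] [DistribMulAction G A]

def seriesStabilizer (c : ℕ → AddSubgroup A) (hc : ∀ (g : G) i, ∀ a ∈ c i, g • a ∈ c i)
    (k : ℕ) : Subgroup G where
  carrier := {g | ∀ i, ∀ a ∈ c (i + k), g • a - a ∈ c i}
  one_mem' := by simp
  mul_mem' {g h} hg hh i a ha := by
    have hsplit : (g * h) • a - a = (g • (h • a) - h • a) + (h • a - a) := by
      rw [mul_smul]; abel
    rw [hsplit]
    exact add_mem (hg i _ (hc h _ a ha)) (hh i a ha)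
  inv_mem' {g} hg i a ha := by
    have hneg : g⁻¹ • a - a = -(g • (g⁻¹ • a) - g⁻¹ • a) := by
      rw [smul_inv_smul]; abel
    rw [hneg]
    exact neg_mem (hg i _ (hc g⁻¹ _ a ha))

namespace seriesStabilizer

variable {c : ℕ → AddSubgroup A} {hc : ∀ (g : G) i, ∀ a ∈ c i, g • a ∈ c i}

theorem antitone (hmono : Monotone c) : Antitone (seriesStabilizer c hc) :=
  fun _ _ hkl _ hg i a ha => hg i a (hmono (by omega) ha)

theorem commutator_le (k l : ℕ) :
    ⁅seriesStabilizer c hc k, seriesStabilizer c hc l⁆ ≤ seriesStabilizer c hc (k + l) := by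
  rw [Subgroup.commutator_le]
  intro g hg h hh i a ha
  set v := (h * g)⁻¹ • a
  have hv : v ∈ c (i + k + l) := hc _ _ a (by rwa [← add_assoc] at ha)
  have hcomm : ⁅g, h⁆ • a - a = (g * h) • v - (h * g) • v := by
    have hmul : ⁅g, h⁆ * (h * g) = g * h := by rw [commutatorElement_def]; group
    rw [← hmul, mul_smul, smul_inv_smul]
  have hexpand : (g * h) • v - (h * g) • v
      = (g • (h • v - v) - (h • v - v)) - (h • (g • v - v) - (g • v - v)) := by
    simp only [mul_smul, smul_sub]
    abel
  have hgh : g • (h • v - v) - (h • v - v) ∈ c i := hg i _ (hh (i + k) v hv)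
  have hhg : h • (g • v - v) - (g • v - v) ∈ c i :=
    hh i _ (hg (i + l) v (by rwa [add_right_comm] at hv))
  rw [hcomm, hexpand]
  exact sub_mem hgh hhg

theorem lowerCentralSeries_le (hstab : ∀ (g : G) i, ∀ a ∈ c (i + 1), g • a - a ∈ c i)
    (k : ℕ) : (⊤ : Subgroup G).lowerCentralSeries k ≤ seriesStabilizer c hc (k + 1) := by
  have hone : seriesStabilizer c hc 1 = ⊤ := eq_top_iff.mpr fun g _ => hstab g
  induction k with
  | zero => exact hone.ge
  | succ k ih =>
    rw [Subgroup.lowerCentralSeries_succ]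
    exact (Subgroup.commutator_mono ih hone.ge).trans (commutator_le _ _)

theorem le_ker (hbot : c 0 = ⊥) {n : ℕ} (htop : c n = ⊤) :
    seriesStabilizer c hc n ≤ (DistribMulAction.toAddAut G A).ker := by
  intro g hg
  ext a
  have hfix : g • a - a ∈ c 0 := hg 0 a (by simp [htop])
  rw [hbot, AddSubgroup.mem_bot, sub_eq_zero] at hfix
  exact hfix

end seriesStabilizer

theorem smul_mem_of_sub_mem {c : ℕ → AddSubgroup A} (hbot : c 0 = ⊥) (hmono : Monotone c)
    (hstab : ∀ (g : G) i, ∀ a ∈ c (i + 1), g • a - a ∈ c i) (g : G) :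
    ∀ i, ∀ a ∈ c i, g • a ∈ c i
  | 0, a, ha => by simp_all
  | i + 1, a, ha => by
    simpa using add_mem (hmono i.le_succ (hstab g i a ha)) ha

end SeriesStabilizer

/-- **Kaluzhnin's theorem.**  If a group `G` acts on an abelian group `A` stabilizing a
series `0 = A₀ ≤ A₁ ≤ … ≤ Aₙ = A` and acting trivially on each factor, then the image
of `G` in `Aut(A)`, i.e. `G/C_G(A)`, is nilpotent of class at most `n - 1`. -/
theorem kaluzhnin {G : Type*} [Group G] {A : Type*} [AddCommGroup A]
    [DistribMulAction G A] (n : ℕ) (c : ℕ → AddSubgroup A)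
    (hbot : c 0 = ⊥) (htop : c n = ⊤)
    (hmono : ∀ i < n, c i ≤ c (i + 1))
    (hstab : ∀ g : G, ∀ i < n, ∀ a ∈ c (i + 1), g • a - a ∈ c i) :
    (⊤ : Subgroup (G ⧸ (DistribMulAction.toAddAut G A).ker)).lowerCentralSeries (n - 1) = ⊥ := by
  -- Freeze the series at `Aₙ = A`, so that the hypotheses hold at every index.
  set d : ℕ → AddSubgroup A := fun i => c (min i n)
  have hdbot : d 0 = ⊥ := by simpa [d] using hbot
  have hdmono : Monotone d := monotone_comp_min hmono
  have hdstab : ∀ (g : G) i, ∀ a ∈ d (i + 1), g • a - a ∈ d i := fun g i a ha => by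
    rcases lt_or_ge i n with hi | hi
    · simpa [d, Nat.min_eq_left hi.le] using hstab g i hi a (by simpa [d, hi] using ha)
    · simp [d, Nat.min_eq_right hi, htop]
  have hdinv := smul_mem_of_sub_mem hdbot hdmono hdstab
  rw [← Subgroup.map_top_of_surjective _ (QuotientGroup.mk'_surjective _),
    ← Subgroup.map_lowerCentralSeries, Subgroup.map_eq_bot_iff, QuotientGroup.ker_mk']
  calc (⊤ : Subgroup G).lowerCentralSeries (n - 1)
      ≤ seriesStabilizer d hdinv (n - 1 + 1) := seriesStabilizer.lowerCentralSeries_le hdstab _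
    _ ≤ seriesStabilizer d hdinv n := seriesStabilizer.antitone hdmono (by omega)
    _ ≤ _ := seriesStabilizer.le_ker hdbot (by simpa [d] using htop)
end

section
/- Let G be a group acting trivially on a subgroup B of an abelian group A and trivially on A/B. Then G/C_G(A) is abelian. -/
/-- If `G` acts trivially on a subgroup `B` of an abelian group `A` and trivially on
`A/B`, then `G/C_G(A)` is abelian: any two elements of `G` have commuting actions. -/
theorem kaluzhnin_two_step {G : Type*} [Group G] {A : Type*} [AddCommGroup A]
    [DistribMulAction G A] (B : AddSubgroup A)
    (hB : ∀ g : G, ∀ b ∈ B, g • b = b)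
    (hAB : ∀ g : G, ∀ a : A, g • a - a ∈ B) :
    ∀ x y : G, ∀ a : A, (x * y) • a = (y * x) • a := by
  have key : ∀ x y : G, ∀ a : A, (x * y) • a = x • a + (y • a - a) := by
    intro x y a
    rw [mul_smul]
    have : y • a = a + (y • a - a) := by abel
    rw [this, smul_add, hB x _ (hAB y a)]; abel
  intro x y a
  rw [key x y a, key y x a]
  abel
end

section
/- Let G be a group that is not finitely generated, acting on an abelian group A, such that A/C_A(H) is artinian-by-(finite rank) for every proper subgroup H of G. If G has a proper normal subgroup of finite index, then A/C_A(G) is artinian-by-(finite rank). -/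
/-!
The subgroup `F` generated by finitely many coset representatives of the finite-index subgroup `N`
satisfies `F ⊔ N = G`, and `F` is proper because `G` is not finitely generated. Then
`C_A(G) = C_A(F) ∩ C_A(N)`, so `A/C_A(G)` embeds in `A/C_A(F) × A/C_A(N)`, and being
artinian-by-(finite rank) passes to finite products and to submodules.
-/

open Cardinal

/-- The fixed points `C_A(H)` of a subgroup `H` acting on an abelian group `A`,
as a `ℤ`-submodule. -/
def fixedZSubmodule {G : Type*} [Group G] {A : Type*} [AddCommGroup A]
    [DistribMulAction G A] (H : Subgroup G) : Submodule ℤ A where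
  carrier := {a | ∀ h ∈ H, h • a = a}
  zero_mem' := fun h _ => smul_zero h
  add_mem' := by
    intro a b ha hb h hh
    rw [smul_add, ha h hh, hb h hh]
  smul_mem' := by
    intro n a ha h hh
    have := AddMonoidHom.map_zsmul (DistribMulAction.toAddMonoidHom A h) n a
    simp only [DistribMulAction.toAddMonoidHom_apply] at this
    rw [this, ha h hh]

/-- A `ℤ`-module is *artinian-by-(finite rank)* if its torsion subgroup is artinian and
the torsion-free quotient has finite rank. -/
def ArtinianByFiniteRankZ (A : Type*) [AddCommGroup A] : Prop :=
  IsArtinian ℤ (Submodule.torsion ℤ A) ∧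
    Module.rank ℤ (A ⧸ Submodule.torsion ℤ A) < ℵ₀

theorem Submodule.map_mem_torsion {R M P : Type*} [CommSemiring R] [AddCommMonoid M]
    [AddCommMonoid P] [Module R M] [Module R P] (f : M →ₗ[R] P) {x : M}
    (hx : x ∈ torsion R M) : f x ∈ torsion R P := by
  obtain ⟨a, hax⟩ := hx
  exact ⟨a, by rw [Submonoid.smul_def, ← map_smul, ← Submonoid.smul_def, hax, map_zero]⟩

theorem LinearMap.rank_range_lt_aleph0 {R M N : Type*} [Ring R] [AddCommGroup M]
    [AddCommGroup N] [Module R M] [Module R N] (f : M →ₗ[R] N)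
    (hM : Module.rank R M < ℵ₀) : Module.rank R (range f) < ℵ₀ :=
  lift_lt_aleph0.1 ((lift_rank_range_le f).trans_lt (lift_lt_aleph0.2 hM))

theorem Subgroup.exists_fg_sup_eq_top {G : Type*} [Group G] (N : Subgroup G) [N.FiniteIndex] :
    ∃ F : Subgroup G, F.FG ∧ F ⊔ N = ⊤ := by
  let out : G ⧸ N → G := Quotient.out
  refine ⟨closure (Set.range out), (fg_iff _).2 ⟨_, rfl, Set.finite_range out⟩,
    eq_top_iff.2 fun g _ => ?_⟩
  have hg : (out g)⁻¹ * g ∈ N := QuotientGroup.eq.1 (QuotientGroup.out_eq' (g : G ⧸ N))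
  simpa using mul_mem_sup (subset_closure (Set.mem_range_self (f := out) g)) hg

section FixedPoints

variable {G A : Type*} [Group G] [AddCommGroup A] [DistribMulAction G A]

theorem mem_fixedZSubmodule_iff_le_stabilizer {H : Subgroup G} {a : A} :
    a ∈ fixedZSubmodule (A := A) H ↔ H ≤ MulAction.stabilizer G a :=
  Iff.rfl

theorem fixedZSubmodule_sup (H K : Subgroup G) :
    fixedZSubmodule (A := A) (H ⊔ K) = fixedZSubmodule H ⊓ fixedZSubmodule K := by
  ext a
  simp only [Submodule.mem_inf, mem_fixedZSubmodule_iff_le_stabilizer, sup_le_iff]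

end FixedPoints

section ArtinianByFiniteRank

open Submodule

variable {M P : Type*} [AddCommGroup M] [AddCommGroup P]

theorem artinianByFiniteRankZ_iff :
    ArtinianByFiniteRankZ M ↔ IsArtinian ℤ (torsion ℤ M) ∧ Module.rank ℤ M < ℵ₀ := by
  rw [ArtinianByFiniteRankZ, rank_quotient_eq_of_le_torsion le_rfl]

theorem ArtinianByFiniteRankZ.of_injective (f : M →ₗ[ℤ] P) (hf : Function.Injective f)
    (hP : ArtinianByFiniteRankZ P) : ArtinianByFiniteRankZ M := by
  rw [artinianByFiniteRankZ_iff] at hP ⊢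
  have := hP.1
  refine ⟨isArtinian_of_injective (f.restrict fun _ => map_mem_torsion f) ?_,
    lift_lt_aleph0.1 ((LinearMap.lift_rank_le_of_injective f hf).trans_lt
      (lift_lt_aleph0.2 hP.2))⟩
  exact fun x y hxy => Subtype.ext (hf (congrArg Subtype.val hxy))

theorem ArtinianByFiniteRankZ.prod (hM : ArtinianByFiniteRankZ M)
    (hP : ArtinianByFiniteRankZ P) : ArtinianByFiniteRankZ (M × P) := by
  rw [artinianByFiniteRankZ_iff] at hM hP ⊢
  have := hM.1
  have := hP.1
  constructor
  · refine isArtinian_of_injective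
      (((LinearMap.fst ℤ M P).restrict fun _ => map_mem_torsion _).prod
        ((LinearMap.snd ℤ M P).restrict fun _ => map_mem_torsion _)) ?_
    intro x y hxy
    simp only [LinearMap.prod_apply, Prod.ext_iff, Subtype.ext_iff] at hxy
    exact Subtype.ext (Prod.ext hxy.1 hxy.2)
  · calc Module.rank ℤ (M × P)
        = Module.rank ℤ ↥(LinearMap.range (LinearMap.inl ℤ M P) ⊔
            LinearMap.range (LinearMap.inr ℤ M P)) := by
          rw [LinearMap.sup_range_inl_inr, rank_top]
      _ ≤ _ := rank_add_le_rank_add_rank _ _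
      _ < ℵ₀ := add_lt_aleph0 ((LinearMap.inl ℤ M P).rank_range_lt_aleph0 hM.2)
          ((LinearMap.inr ℤ M P).rank_range_lt_aleph0 hP.2)

end ArtinianByFiniteRank

theorem ArtinianByFiniteRankZ.quotient_inf {A : Type*} [AddCommGroup A] {B C : Submodule ℤ A}
    (hB : ArtinianByFiniteRankZ (A ⧸ B)) (hC : ArtinianByFiniteRankZ (A ⧸ C)) :
    ArtinianByFiniteRankZ (A ⧸ B ⊓ C) := by
  let f := B.mkQ.prod C.mkQ
  have hker : LinearMap.ker f = B ⊓ C := by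
    rw [LinearMap.ker_prod, Submodule.ker_mkQ, Submodule.ker_mkQ]
  exact (hB.prod hC).of_injective ((B ⊓ C).liftQ f hker.ge)
    (LinearMap.ker_eq_bot.1 (Submodule.ker_liftQ_eq_bot _ _ _ hker.le))

/-- Let `G` be a group that is not finitely generated, acting on an abelian group `A`,
such that `A/C_A(H)` is artinian-by-(finite rank) for every proper subgroup `H` of `G`.
If `G` has a proper normal subgroup of finite index, then `A/C_A(G)` is
artinian-by-(finite rank). -/
theorem abfr_cocentralizer_of_finite_index {G : Type*} [Group G] {A : Type*}
    [AddCommGroup A] [DistribMulAction G A]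
    (hfg : ¬ Group.FG G)
    (hH : ∀ H : Subgroup G, H ≠ ⊤ → ArtinianByFiniteRankZ (A ⧸ fixedZSubmodule (A := A) H))
    (hN : ∃ N : Subgroup G, N.Normal ∧ N ≠ ⊤ ∧ N.index ≠ 0) :
    ArtinianByFiniteRankZ (A ⧸ fixedZSubmodule (A := A) (⊤ : Subgroup G)) := by
  obtain ⟨N, -, hN_ne, hN_index⟩ := hN
  have : N.FiniteIndex := ⟨hN_index⟩
  obtain ⟨F, hF_fg, hFN⟩ := N.exists_fg_sup_eq_top
  have hF_ne : F ≠ ⊤ := fun hF => hfg ⟨hF ▸ hF_fg⟩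
  rw [← hFN, fixedZSubmodule_sup]
  exact (hH F hF_ne).quotient_inf (hH N hN_ne)
end
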